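/- Let q be a prime power and consider the generalized quadrangle Q(4,q) of order (q,q) with a subquadrangle of order (q,1) (a hyperbolic quadric section with (q+1)² points and 2(q+1) lines) removed. The resulting structure has q³ + q² + q + 1 − (q+1)² = q³ − q points and q³ + q² + q + 1 − 2(q+1) = (q−1)(q+1)² lines; counting incidences shows every remaining line contains exactly one deleted point, so the incidence graph is a (q, q+1; 8)-bipartite biregular graph of order (2q+1)(q² − 1). -/

import Mathlib

/-- A finite generalized quadrangle of order `(s,t)`. -/
structure GenQuad (P L : Type*) (s t : ℕ) where
  inc : P → L → Prop
  line_pts : ∀ ℓ : L, {p : P | inc p ℓ}.ncard = s + 1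
  pt_lines : ∀ p : P, {ℓ : L | inc p ℓ}.ncard = t + 1
  unique_line : ∀ ⦃p q : P⦄ ⦃ℓ ℓ' : L⦄, p ≠ q → inc p ℓ → inc q ℓ →
    inc p ℓ' → inc q ℓ' → ℓ = ℓ'
  gq : ∀ (p : P) (ℓ : L), ¬ inc p ℓ →
    ∃! q : P, inc q ℓ ∧ q ≠ p ∧ ∃ ℓ' : L, inc p ℓ' ∧ inc q ℓ'

/-- The incidence graph of a point-line incidence relation `I`. -/
def incGraph {P L : Type*} (I : P → L → Prop) : SimpleGraph (P ⊕ L) where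
  Adj x y :=
    match x, y with
    | Sum.inl p, Sum.inr l => I p l
    | Sum.inr l, Sum.inl p => I p l
    | _, _ => False
  symm := ⟨by rintro (p | l) (p' | l') h <;> exact h⟩
  loopless := ⟨by rintro (p | l) h <;> exact h⟩

/-!
Double counting the incidences between deleted points and lines gives
`(q + 1)² (q + 1) = 2 (q + 1) (q + 1) + (q - 1) (q + 1)²`: the deleted lines use up
`2 (q + 1) (q + 1)` of them and every remaining line at least one, so every remaining line
carries exactly one deleted point. The remaining structure thus has `q + 1` lines on each point
and `q` points on each line. Its incidence graph inherits from the quadrangle the absence of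
digons and triangles, i.e. girth at least 8. For an 8-cycle, count the non-backtracking paths
`p, l₁, a, l₂, z` from a remaining point `p`: there are `(q + 1)(q - 1) · q(q - 1) ≥ q³ - q`
of them and none ends at `p`, so two end at the same point `z`, and together they close up to
an ordinary quadrangle.
-/

open SimpleGraph

lemma Nat.card_sigma_of_forall_card_eq {α : Type*} {β : α → Type*} [Finite α]
    [∀ a, Finite (β a)] {m : ℕ} (h : ∀ a, Nat.card (β a) = m) :
    Nat.card (Σ a, β a) = Nat.card α * m := by
  have := Fintype.ofFinite α
  simp [Nat.card_sigma, h]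

lemma Set.nat_card_mem_and_ne {α : Type*} {s : Set α} {x : α} (hx : x ∈ s) :
    Nat.card {y // y ∈ s ∧ y ≠ x} = s.ncard - 1 :=
  (Nat.card_coe_set_eq (s \ {x})).trans (Set.ncard_sdiff_singleton_of_mem hx)

section IncidenceGraph

variable {V W : Type*} (I : V → W → Prop)

@[simp]
lemma incGraph_adj_inl_inr {p : V} {l : W} : (incGraph I).Adj (.inl p) (.inr l) ↔ I p l :=
  Iff.rfl

@[simp]
lemma incGraph_adj_inr_inl {p : V} {l : W} : (incGraph I).Adj (.inr l) (.inl p) ↔ I p l :=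
  Iff.rfl

@[simp]
lemma not_incGraph_adj_inl_inl {p p' : V} : ¬ (incGraph I).Adj (.inl p) (.inl p') :=
  id

@[simp]
lemma not_incGraph_adj_inr_inr {l l' : W} : ¬ (incGraph I).Adj (.inr l) (.inr l') :=
  id

def incGraphColoring : (incGraph I).Coloring Bool :=
  Coloring.mk Sum.isLeft (by rintro (p | l) (p' | l') h <;> simp_all)

lemma even_length_of_incGraph_walk {x : V ⊕ W} (w : (incGraph I).Walk x x) : Even w.length :=
  ((incGraphColoring I).even_length_iff_congr w).2 Iff.rfl

lemma ncard_incGraph_neighborSet_inl (p : V) :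
    ((incGraph I).neighborSet (.inl p)).ncard = {l | I p l}.ncard := by
  have : (incGraph I).neighborSet (.inl p) = Sum.inr '' {l | I p l} := by
    ext (p' | l) <;> simp
  rw [this, Set.ncard_image_of_injective _ Sum.inr_injective]

lemma ncard_incGraph_neighborSet_inr (l : W) :
    ((incGraph I).neighborSet (.inr l)).ncard = {p | I p l}.ncard := by
  have : (incGraph I).neighborSet (.inr l) = Sum.inl '' {p | I p l} := by
    ext (p | l') <;> simp
  rw [this, Set.ncard_image_of_injective _ Sum.inl_injective]

lemma incGraph_egirth_le_eight {p a z b : V} {l₁ l₂ l₃ l₄ : W}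
    (hpa : p ≠ a) (hpz : p ≠ z) (hpb : p ≠ b) (haz : a ≠ z) (hab : a ≠ b) (hzb : z ≠ b)
    (h₁₂ : l₁ ≠ l₂) (h₂₃ : l₂ ≠ l₃) (h₃₄ : l₃ ≠ l₄) (h₄₁ : l₄ ≠ l₁)
    (i₁ : I p l₁) (i₂ : I a l₁) (i₃ : I a l₂) (i₄ : I z l₂)
    (i₅ : I z l₃) (i₆ : I b l₃) (i₇ : I b l₄) (i₈ : I p l₄) :
    (incGraph I).egirth ≤ 8 := by
  have e {x : V} {l : W} (h : I x l) := (incGraph_adj_inl_inr I).2 h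
  have e' {x : V} {l : W} (h : I x l) := (incGraph_adj_inr_inl I).2 h
  let w : (incGraph I).Walk (.inl p) (.inl p) :=
    .cons (e i₁) <| .cons (e' i₂) <| .cons (e i₃) <| .cons (e' i₄) <|
    .cons (e i₅) <| .cons (e' i₆) <| .cons (e i₇) <| .cons (e' i₈) .nil
  have hw : w.IsCircuit := by
    refine ⟨?_, by simp [w]⟩
    rw [Walk.isTrail_def]
    simp [w, hpa, hpz, hpb, haz, hab, hzb, h₁₂, h₂₃, h₃₄, hpa.symm, hpz.symm, hpb.symm, h₄₁.symm]
  exact hw.egirth_le_length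

end IncidenceGraph

/-- Two points lie on at most one common line and there are no triangles; equivalently, the
incidence graph has no cycles of length 4 or 6. -/
structure IsTriangleFree {V W : Type*} (I : V → W → Prop) : Prop where
  eq_of_inc : ∀ ⦃p p' : V⦄ ⦃l l' : W⦄, p ≠ p' → I p l → I p' l → I p l' → I p' l' → l = l'
  not_triangle : ∀ ⦃p₁ p₂ p₃ : V⦄ ⦃l₁ l₂ l₃ : W⦄, p₁ ≠ p₂ → p₂ ≠ p₃ → l₁ ≠ l₂ →
    I p₁ l₁ → I p₂ l₁ → I p₂ l₂ → I p₃ l₂ → I p₃ l₃ → I p₁ l₃ → False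

namespace IsTriangleFree

variable {V W : Type*} {I : V → W → Prop}

lemma comap {V' W' : Type*} {f : V' → V} {g : W' → W} (hI : IsTriangleFree I)
    (hf : f.Injective) (hg : g.Injective) : IsTriangleFree (fun p l => I (f p) (g l)) where
  eq_of_inc _ _ _ _ hp h₁ h₂ h₃ h₄ := hg (hI.eq_of_inc (hf.ne hp) h₁ h₂ h₃ h₄)
  not_triangle _ _ _ _ _ _ h₁₂ h₂₃ h₁₂' := hI.not_triangle (hf.ne h₁₂) (hf.ne h₂₃) (hg.ne h₁₂')

lemma not_cycle_four (hI : IsTriangleFree I) {x₀ x₁ x₂ x₃ : V ⊕ W}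
    (h₀₁ : (incGraph I).Adj x₀ x₁) (h₁₂ : (incGraph I).Adj x₁ x₂)
    (h₂₃ : (incGraph I).Adj x₂ x₃) (h₃₀ : (incGraph I).Adj x₃ x₀)
    (h₀₂ : x₀ ≠ x₂) (h₁₃ : x₁ ≠ x₃) : False := by
  rcases x₀ with p₀ | l₀ <;> rcases x₁ with p₁ | l₁ <;> rcases x₂ with p₂ | l₂ <;>
    rcases x₃ with p₃ | l₃ <;> simp only [incGraph_adj_inl_inr, incGraph_adj_inr_inl,
      not_incGraph_adj_inl_inl, not_incGraph_adj_inr_inr, ne_eq, Sum.inl.injEq,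
      Sum.inr.injEq] at *
  · exact h₁₃ (hI.eq_of_inc h₀₂ h₀₁ h₁₂ h₃₀ h₂₃)
  · exact h₀₂ (hI.eq_of_inc h₁₃ h₀₁ h₃₀ h₁₂ h₂₃)

lemma not_cycle_six (hI : IsTriangleFree I) {x₀ x₁ x₂ x₃ x₄ x₅ : V ⊕ W}
    (h₀₁ : (incGraph I).Adj x₀ x₁) (h₁₂ : (incGraph I).Adj x₁ x₂)
    (h₂₃ : (incGraph I).Adj x₂ x₃) (h₃₄ : (incGraph I).Adj x₃ x₄)
    (h₄₅ : (incGraph I).Adj x₄ x₅) (h₅₀ : (incGraph I).Adj x₅ x₀)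
    (h₀₂ : x₀ ≠ x₂) (h₂₄ : x₂ ≠ x₄) (h₁₃ : x₁ ≠ x₃) (h₃₅ : x₃ ≠ x₅) : False := by
  rcases x₀ with p₀ | l₀ <;> rcases x₁ with p₁ | l₁ <;> rcases x₂ with p₂ | l₂ <;>
    rcases x₃ with p₃ | l₃ <;> rcases x₄ with p₄ | l₄ <;> rcases x₅ with p₅ | l₅ <;>
    simp only [incGraph_adj_inl_inr, incGraph_adj_inr_inl,
      not_incGraph_adj_inl_inl, not_incGraph_adj_inr_inr, ne_eq, Sum.inl.injEq,
      Sum.inr.injEq] at *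
  · exact hI.not_triangle h₀₂ h₂₄ h₁₃ h₀₁ h₁₂ h₂₃ h₃₄ h₄₅ h₅₀
  · exact hI.not_triangle h₁₃ h₃₅ h₂₄ h₁₂ h₂₃ h₃₄ h₄₅ h₅₀ h₀₁

lemma eight_le_egirth (hI : IsTriangleFree I) : 8 ≤ (incGraph I).egirth := by
  refine le_egirth.2 fun x w hw => ?_
  by_contra! hlt
  have hlen : w.length = 4 ∨ w.length = 6 := by
    have := hw.three_le_length
    obtain ⟨k, hk⟩ := even_length_of_incGraph_walk I w
    norm_cast at hlt
    omega
  have hinj := hw.getVert_injOn'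
  have hadj (i : ℕ) (hi : i < w.length) := w.adj_getVert_succ hi
  have hne {i j : ℕ} (hi : i ≤ w.length - 1) (hj : j ≤ w.length - 1) (hij : i ≠ j) :
      w.getVert i ≠ w.getVert j := fun h => hij (hinj hi hj h)
  have hlast {n : ℕ} (hn : w.length = n + 1) : (incGraph I).Adj (w.getVert n) (w.getVert 0) := by
    simpa only [← hn, w.getVert_length, w.getVert_zero] using hadj n (by omega)
  rcases hlen with h | h
  · refine hI.not_cycle_four (hadj 0 (by omega)) (hadj 1 (by omega)) (hadj 2 (by omega))
      (hlast h)
      (hne (by omega) (by omega) (by omega)) (hne (by omega) (by omega) (by omega))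
  · refine hI.not_cycle_six (hadj 0 (by omega)) (hadj 1 (by omega)) (hadj 2 (by omega))
      (hadj 3 (by omega)) (hadj 4 (by omega))
      (hlast h)
      (hne (by omega) (by omega) (by omega)) (hne (by omega) (by omega) (by omega))
      (hne (by omega) (by omega) (by omega)) (hne (by omega) (by omega) (by omega))

variable (I) in
/-- Paths `p, l₁, a, l₂, z` in the incidence graph that never step back. -/
abbrev TwoStep (p : V) : Type _ :=
  Σ (l₁ : {l // I p l}) (a : {a // I a l₁ ∧ a ≠ p}) (l₂ : {l // I a l ∧ l ≠ l₁}),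
    {z // I z l₂ ∧ z ≠ a}

lemma card_twoStep [Finite V] [Finite W] {t k : ℕ} (hpt : ∀ p, {l | I p l}.ncard = t + 1)
    (hline : ∀ l, {p | I p l}.ncard = k) (p : V) :
    Nat.card (TwoStep I p) = (t + 1) * ((k - 1) * (t * (k - 1))) := by
  have hz (a : V) (l : {l // I a l}) : Nat.card {z // I z l ∧ z ≠ a} = k - 1 :=
    (Set.nat_card_mem_and_ne (s := {z | I z l}) l.2).trans (by rw [hline])
  have hl (a : V) (l : {l // I a l}) : Nat.card {l' // I a l' ∧ l' ≠ l} = t :=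
    (Set.nat_card_mem_and_ne (s := {l' | I a l'}) l.2).trans (by rw [hpt, Nat.add_sub_cancel])
  have hl₁ : Nat.card {l // I p l} = t + 1 := (Nat.card_coe_set_eq {l | I p l}).trans (hpt p)
  rw [TwoStep, Nat.card_sigma_of_forall_card_eq (m := (k - 1) * (t * (k - 1))), hl₁]
  intro l₁
  rw [Nat.card_sigma_of_forall_card_eq (m := t * (k - 1)), hz p l₁]
  intro a
  rw [Nat.card_sigma_of_forall_card_eq (m := k - 1), hl a ⟨l₁, a.2.1⟩]
  intro l₂
  exact hz a ⟨l₂, l₂.2.1⟩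

lemma twoStep_end_ne (hI : IsTriangleFree I) {p : V} (x : TwoStep I p) : x.2.2.2.1 ≠ p := by
  obtain ⟨⟨l₁, hpl₁⟩, ⟨a, hal₁, hap⟩, ⟨l₂, hal₂, hl₂₁⟩, ⟨z, hzl₂, -⟩⟩ := x
  intro (h : z = p)
  subst h
  exact hl₂₁ (hI.eq_of_inc hap.symm hzl₂ hal₂ hpl₁ hal₁)

lemma egirth_le_eight_of_twoStep (hI : IsTriangleFree I) {p : V} {x y : TwoStep I p}
    (hxy : x ≠ y) (hend : x.2.2.2.1 = y.2.2.2.1) : (incGraph I).egirth ≤ 8 := by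
  have hzp := hI.twoStep_end_ne x
  obtain ⟨⟨l₁, hpl₁⟩, ⟨a, hal₁, hap⟩, ⟨l₂, hal₂, hl₂₁⟩, ⟨z, hzl₂, hza⟩⟩ := x
  obtain ⟨⟨l₄, hpl₄⟩, ⟨b, hbl₄, hbp⟩, ⟨l₃, hbl₃, hl₃₄⟩, ⟨z', hzl₃, hzb⟩⟩ := y
  obtain rfl : z = z' := hend
  have hab : a ≠ b := by
    rintro rfl
    obtain rfl := hI.eq_of_inc hza.symm hal₂ hzl₂ hbl₃ hzl₃
    obtain rfl := hI.eq_of_inc hap.symm hpl₁ hal₁ hpl₄ hbl₄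
    exact hxy rfl
  have hl₄₁ : l₄ ≠ l₁ := by
    rintro rfl
    exact hI.not_triangle hza hab hl₂₁ hzl₂ hal₂ hal₁ hbl₄ hbl₃ hzl₃
  have hl₂₃ : l₂ ≠ l₃ := by
    rintro rfl
    exact hI.not_triangle hap.symm hab hl₂₁.symm hpl₁ hal₁ hal₂ hbl₃ hbl₄ hpl₄
  exact incGraph_egirth_le_eight I hap.symm hzp.symm hbp.symm hza.symm hab hzb hl₂₁.symm hl₂₃
    hl₃₄ hl₄₁ hpl₁ hal₁ hal₂ hzl₂ hzl₃ hbl₃ hbl₄ hpl₄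

lemma egirth_le_eight [Finite V] [Finite W] (hI : IsTriangleFree I) {t k : ℕ}
    (hpt : ∀ p, {l | I p l}.ncard = t + 1) (hline : ∀ l, {p | I p l}.ncard = k) (p : V)
    (hcard : Nat.card V ≤ (t + 1) * ((k - 1) * (t * (k - 1)))) :
    (incGraph I).egirth ≤ 8 := by
  by_contra! hgt
  let f : TwoStep I p → ({p}ᶜ : Set V) := fun x => ⟨x.2.2.2.1, hI.twoStep_end_ne x⟩
  have hf : f.Injective := fun x y hxy =>
    by_contra fun hne => hgt.not_ge (hI.egirth_le_eight_of_twoStep hne (congrArg Subtype.val hxy))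
  have hle := Nat.card_le_card_of_injective f hf
  have hcompl := Set.ncard_add_ncard_compl {p}
  rw [card_twoStep hpt hline, Nat.card_coe_set_eq] at hle
  rw [Set.ncard_singleton] at hcompl
  omega

end IsTriangleFree

namespace GenQuad

variable {P L : Type*} {s t : ℕ} (G : GenQuad P L s t)

lemma isTriangleFree : IsTriangleFree G.inc where
  eq_of_inc := G.unique_line
  not_triangle p₁ p₂ p₃ l₁ l₂ l₃ h₁₂ h₂₃ hl i₁₁ i₂₁ i₂₂ i₃₂ i₃₃ i₁₃ := by
    have hp₁l₂ : ¬ G.inc p₁ l₂ := fun h => hl (G.unique_line h₁₂ i₁₁ i₂₁ h i₂₂)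
    have h₃₁ : p₃ ≠ p₁ := by
      rintro rfl
      exact hp₁l₂ i₃₂
    obtain ⟨_, _, huniq⟩ := G.gq p₁ l₂ hp₁l₂
    exact h₂₃ ((huniq p₂ ⟨i₂₂, h₁₂.symm, l₁, i₁₁, i₂₁⟩).trans
      (huniq p₃ ⟨i₃₂, h₃₁, l₃, i₁₃, i₃₃⟩).symm)

lemma ncard_sep_inc_eq_one [Finite P] [Finite L] {Pd : Set P} {Ld : Set L}
    (hsub : ∀ ℓ ∈ Ld, ∀ p, G.inc p ℓ → p ∈ Pd) (hmeet : ∀ ℓ, ∃ p ∈ Pd, G.inc p ℓ)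
    (hcount : Pd.ncard * (t + 1) = Ld.ncard * (s + 1) + Ldᶜ.ncard) {ℓ : L} (hℓ : ℓ ∉ Ld) :
    {p ∈ Pd | G.inc p ℓ}.ncard = 1 := by
  classical
  have := Fintype.ofFinite P
  have := Fintype.ofFinite L
  set N : L → ℕ := fun ℓ => (Pd.toFinset.filter (G.inc · ℓ)).card
  have hN (ℓ : L) : {p ∈ Pd | G.inc p ℓ}.ncard = N ℓ := by
    rw [Set.ncard_eq_toFinset_card']
    congr 1
    ext
    simp
  have htotal : ∑ ℓ, N ℓ = Pd.ncard * (t + 1) := by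
    have hpt (p : P) : (Finset.univ.filter (G.inc p)).card = t + 1 := by
      rw [← G.pt_lines p, Set.ncard_eq_toFinset_card', Set.toFinset_ofPred]
    calc ∑ ℓ, N ℓ = ∑ p ∈ Pd.toFinset, (Finset.univ.filter (G.inc p)).card :=
          (Finset.sum_card_bipartiteAbove_eq_sum_card_bipartiteBelow G.inc).symm
      _ = Pd.ncard * (t + 1) := by
          rw [Finset.sum_congr rfl fun p _ => hpt p, Finset.sum_const, smul_eq_mul,
            Set.ncard_eq_toFinset_card']
  have hdel : ∑ ℓ ∈ Ld.toFinset, N ℓ = Ld.ncard * (s + 1) := by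
    rw [Finset.sum_congr rfl fun ℓ hℓ => (?_ : N ℓ = s + 1), Finset.sum_const, smul_eq_mul,
      ← Set.ncard_eq_toFinset_card']
    rw [← hN, ← G.line_pts ℓ]
    congr 1
    ext p
    exact ⟨And.right, fun h => ⟨hsub ℓ (by simpa using hℓ) p h, h⟩⟩
  have hrest : ∑ ℓ ∈ Ldᶜ.toFinset, 1 = ∑ ℓ ∈ Ldᶜ.toFinset, N ℓ := by
    rw [← Finset.sum_add_sum_compl Ld.toFinset, hdel, ← Set.toFinset_compl] at htotal
    rw [Finset.sum_const, smul_eq_mul, mul_one, ← Set.ncard_eq_toFinset_card']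
    omega
  have hpos (ℓ : L) : 1 ≤ N ℓ := by
    obtain ⟨p, hp, hpℓ⟩ := hmeet ℓ
    exact Finset.card_pos.2 ⟨p, by simpa using ⟨hp, hpℓ⟩⟩
  rw [hN]
  exact ((Finset.sum_eq_sum_iff_of_le fun ℓ _ => hpos ℓ).1 hrest ℓ (by simpa using hℓ)).symm

lemma ncard_setOf_inc_diff [Finite P] {Pd : Set P} {ℓ : L}
    (hone : {p ∈ Pd | G.inc p ℓ}.ncard = 1) : ({p | G.inc p ℓ} \ Pd).ncard = s := by
  have := Set.ncard_inter_add_ncard_sdiff_eq_ncard {p | G.inc p ℓ} Pd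
  rw [Set.inter_comm, G.line_pts] at this
  change {p ∈ Pd | G.inc p ℓ}.ncard + _ = _ at this
  omega

lemma ncard_lines_through_remaining {Pd : Set P} {Ld : Set L}
    (hsub : ∀ ℓ ∈ Ld, ∀ p, G.inc p ℓ → p ∈ Pd) (p : {p // p ∉ Pd}) :
    {ℓ : {ℓ // ℓ ∉ Ld} | G.inc p ℓ}.ncard = t + 1 := by
  rw [← G.pt_lines p]
  exact Set.ncard_preimage_of_injective_subset_range Subtype.val_injective
    fun ℓ hℓ => ⟨⟨ℓ, fun h => p.2 (hsub ℓ h p hℓ)⟩, rfl⟩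

lemma ncard_points_on_remaining [Finite P] {Pd : Set P} {Ld : Set L} (ℓ : {ℓ // ℓ ∉ Ld})
    (hone : {p ∈ Pd | G.inc p ℓ}.ncard = 1) :
    {p : {p // p ∉ Pd} | G.inc p ℓ}.ncard = s := by
  calc _ = (Subtype.val '' {p : {p // p ∉ Pd} | G.inc p ℓ}).ncard :=
        (Set.ncard_image_of_injective _ Subtype.val_injective).symm
    _ = ({p | G.inc p ℓ} \ Pd).ncard := by
        congr 1
        ext p
        simp [and_comm]
    _ = s := G.ncard_setOf_inc_diff hone

end GenQuad

/-- Removing a hyperbolic quadric hyperplane section (`(q+1)²` points and `2(q+1)` lines,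
every deleted line having all its points deleted, every line meeting the section) from the
generalized quadrangle `Q(4,q)` of order `(q,q)` leaves `q³+q²+q+1−(q+1)² = q³−q` points and
`q³+q²+q+1−2(q+1) = (q−1)(q+1)²` lines; every remaining line contains exactly one deleted
point, and the incidence graph of the remaining structure is a `(q,q+1;8)`-bipartite
biregular graph of order `(2q+1)(q²−1)`. -/
theorem stmt13 {P L : Type*} [Finite P] [Finite L] (q : ℕ) (hq : IsPrimePow q)
    (G : GenQuad P L q q)
    (hP : Nat.card P = q ^ 3 + q ^ 2 + q + 1) (hL : Nat.card L = q ^ 3 + q ^ 2 + q + 1)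
    (Pd : Set P) (Ld : Set L)
    (hPd : Pd.ncard = (q + 1) ^ 2) (hLd : Ld.ncard = 2 * (q + 1))
    (hsub : ∀ ℓ ∈ Ld, ∀ p : P, G.inc p ℓ → p ∈ Pd)
    (hmeet : ∀ ℓ : L, ∃ p ∈ Pd, G.inc p ℓ) :
    (q ^ 3 + q ^ 2 + q + 1) - (q + 1) ^ 2 = q ^ 3 - q ∧
    (q ^ 3 + q ^ 2 + q + 1) - 2 * (q + 1) = (q - 1) * (q + 1) ^ 2 ∧
    {p : P | p ∉ Pd}.ncard = q ^ 3 - q ∧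
    {ℓ : L | ℓ ∉ Ld}.ncard = (q - 1) * (q + 1) ^ 2 ∧
    (∀ ℓ : L, ℓ ∉ Ld → {p ∈ Pd | G.inc p ℓ}.ncard = 1) ∧
    (let Γ := incGraph (fun (p : {p : P // p ∉ Pd}) (ℓ : {ℓ : L // ℓ ∉ Ld}) => G.inc p.1 ℓ.1)
     Γ.girth = 8 ∧
     (∀ p : {p : P // p ∉ Pd}, (Γ.neighborSet (Sum.inl p)).ncard = q + 1) ∧
     (∀ ℓ : {ℓ : L // ℓ ∉ Ld}, (Γ.neighborSet (Sum.inr ℓ)).ncard = q) ∧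
     Nat.card ({p : P // p ∉ Pd} ⊕ {ℓ : L // ℓ ∉ Ld}) = (2 * q + 1) * (q ^ 2 - 1)) := by
  have hq2 : 2 ≤ q := hq.two_le
  have hq3 : q < q ^ 3 := by nlinarith
  have hq1 : 1 ≤ q ^ 2 := Nat.one_le_pow _ _ (by omega)
  have harith₁ : (q ^ 3 + q ^ 2 + q + 1) - (q + 1) ^ 2 = q ^ 3 - q := by
    zify [hq3.le, (by nlinarith : (q + 1) ^ 2 ≤ q ^ 3 + q ^ 2 + q + 1)]
    ring
  have harith₂ : (q ^ 3 + q ^ 2 + q + 1) - 2 * (q + 1) = (q - 1) * (q + 1) ^ 2 := by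
    zify [(by omega : 1 ≤ q), (by nlinarith : 2 * (q + 1) ≤ q ^ 3 + q ^ 2 + q + 1)]
    ring
  have hPr : {p : P | p ∉ Pd}.ncard = q ^ 3 - q := by
    rw [← harith₁, ← hP, ← hPd]
    exact Set.ncard_compl Pd
  have hLr : {ℓ : L | ℓ ∉ Ld}.ncard = (q - 1) * (q + 1) ^ 2 := by
    rw [← harith₂, ← hL, ← hLd]
    exact Set.ncard_compl Ld
  have hone (ℓ : L) (hℓ : ℓ ∉ Ld) : {p ∈ Pd | G.inc p ℓ}.ncard = 1 := by
    refine G.ncard_sep_inc_eq_one hsub hmeet ?_ hℓ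
    rw [hPd, hLd, Set.compl_def, hLr]
    zify [(by omega : 1 ≤ q)]
    ring
  set I := fun (p : {p : P // p ∉ Pd}) (ℓ : {ℓ : L // ℓ ∉ Ld}) => G.inc p.1 ℓ.1
  have hI : IsTriangleFree I := G.isTriangleFree.comap Subtype.val_injective Subtype.val_injective
  have hpt (p : {p : P // p ∉ Pd}) : {ℓ | I p ℓ}.ncard = q + 1 :=
    G.ncard_lines_through_remaining hsub p
  have hline (ℓ : {ℓ : L // ℓ ∉ Ld}) : {p | I p ℓ}.ncard = q :=
    G.ncard_points_on_remaining ℓ (hone ℓ ℓ.2)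
  have hPcard : Nat.card {p : P // p ∉ Pd} = q ^ 3 - q := (Nat.card_coe_set_eq _).trans hPr
  have hLcard : Nat.card {ℓ : L // ℓ ∉ Ld} = (q - 1) * (q + 1) ^ 2 :=
    (Nat.card_coe_set_eq _).trans hLr
  obtain ⟨p⟩ : Nonempty {p : P // p ∉ Pd} := (Nat.card_pos_iff.1 (by omega)).1
  refine ⟨harith₁, harith₂, hPr, hLr, hone, ?_, ?_, ?_, ?_⟩
  · have hcount : Nat.card {p : P // p ∉ Pd} ≤ (q + 1) * ((q - 1) * (q * (q - 1))) := by
      rw [hPcard]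
      zify [hq3.le, (by omega : 1 ≤ q)]
      have h₁ : (q : ℤ) ≤ q ^ 3 := by exact_mod_cast hq3.le
      have h₂ : (0 : ℤ) ≤ q - 2 := by omega
      nlinarith [mul_nonneg (sub_nonneg.2 h₁) h₂]
    have : (incGraph I).egirth = 8 :=
      le_antisymm (hI.egirth_le_eight hpt hline p hcount) hI.eight_le_egirth
    simp [SimpleGraph.girth, this]
  · exact fun p => (ncard_incGraph_neighborSet_inl I p).trans (hpt p)
  · exact fun ℓ => (ncard_incGraph_neighborSet_inr I ℓ).trans (hline ℓ)
  · rw [Nat.card_sum, hPcard, hLcard]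
    zify [hq3.le, hq1, (by omega : 1 ≤ q)]
    ring
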